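/- Let d, m ∈ ℕ₊. Let ℳ : C([−1,1]^d) → C([−1,1]^d) satisfy Assumption 1 and Assumption 2, and let V : C([−1,1]^d) → Π_m be a linear operator such that ‖ h − V h ‖_{L∞} ≤ (5d/4) · ω_h(2/m; [−1,1]^d) for every h ∈ C([−1,1]^d). Then for every f ∈ C([−1,1]^d) and all x₁, x₂ ∈ [−1,1]^d, |ℳ(V(f))(x₁) − ℳ(V(f))(x₂)| ≤ (5 L_ℳ d / 2) · ω_f(2/m; [−1,1]^d) + L_𝒴 ‖x₁ − x₂‖₂; in particular ω_{ℳ(V(f))}(2/m; [−1,1]^d) ≤ (5 L_ℳ d / 2) · ω_f(2/m; [−1,1]^d) + 2 L_𝒴 / m. -/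
import Mathlib


open scoped BigOperators

/-- The cube `[-1,1]^d` in `ℝ^d`. -/
def cube (d : ℕ) : Set (Fin d → ℝ) := {x | ∀ i, |x i| ≤ 1}

/-- The Euclidean distance on `ℝ^d`. -/
noncomputable def eucDist {d : ℕ} (x y : Fin d → ℝ) : ℝ :=
  Real.sqrt (∑ i, (x i - y i) ^ 2)

/-- The sup (`L∞`) norm of `f` over the cube `[-1,1]^d`. -/
noncomputable def supNorm (d : ℕ) (f : (Fin d → ℝ) → ℝ) : ℝ :=
  sSup {y | ∃ x ∈ cube d, y = |f x|}

/-- Modulus of continuity of `f` on a set `s ⊆ ℝ^d` (Euclidean distance). -/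
noncomputable def modContOn {d : ℕ} (s : Set (Fin d → ℝ)) (f : (Fin d → ℝ) → ℝ)
    (r : ℝ) : ℝ :=
  sSup {y | ∃ x₁ ∈ s, ∃ x₂ ∈ s, eucDist x₁ x₂ ≤ r ∧ y = |f x₁ - f x₂|}

/-- Modulus of continuity of `f` on the cube `[-1,1]^d`. -/
noncomputable def modCont (d : ℕ) (f : (Fin d → ℝ) → ℝ) (r : ℝ) : ℝ :=
  modContOn (cube d) f r

/-- `f : ℝ^d → ℝ` is (the evaluation of) a polynomial in `d` variables of
coordinatewise degree at most `m`, i.e. `f ∈ Π_m`. -/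
def IsPolyDeg (d m : ℕ) (f : (Fin d → ℝ) → ℝ) : Prop :=
  ∃ p : MvPolynomial (Fin d) ℝ,
    (∀ i, MvPolynomial.degreeOf i p ≤ m) ∧ ∀ x, f x = MvPolynomial.eval x p


lemma cube_isCompact (d : ℕ) : IsCompact (cube d) := by
  have : cube d = Set.pi Set.univ (fun _ : Fin d => Set.Icc (-1 : ℝ) 1) := by
    ext x
    simp [cube, Set.mem_pi, abs_le, Pi.le_def, forall_and]
  rw [this]
  exact isCompact_univ_pi fun _ => isCompact_Icc

lemma abs_le_supNorm {d : ℕ} (g : (Fin d → ℝ) → ℝ) (hg : ContinuousOn g (cube d))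
    {x : Fin d → ℝ} (hx : x ∈ cube d) : |g x| ≤ supNorm d g := by
  have hset : {y | ∃ x ∈ cube d, y = |g x|} = (fun x => |g x|) '' cube d := by
    ext y
    simp [Set.mem_image, eq_comm]
  have hbdd : BddAbove {y | ∃ x ∈ cube d, y = |g x|} := by
    rw [hset]
    exact ((cube_isCompact d).image_of_continuousOn hg.abs).bddAbove
  exact le_csSup hbdd ⟨x, hx, rfl⟩

/-- Under Assumptions 1 and 2 on `ℳ` and the Bernstein-type error bound
for the linear operator `V : C([-1,1]^d) → Π_m`, the function `ℳ(V(f))` satisfies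
`|ℳ(V(f))(x₁) − ℳ(V(f))(x₂)| ≤ (5 L_ℳ d / 2) ω_f(2/m) + L_𝒴 ‖x₁ − x₂‖₂` on the cube, and
in particular `ω_{ℳ(V(f))}(2/m) ≤ (5 L_ℳ d / 2) ω_f(2/m) + 2 L_𝒴 / m`. -/
theorem modCont_of_composition (d m : ℕ) (hd : 0 < d) (hm : 0 < m)
    (LM LY : ℝ) (hLM : 0 ≤ LM) (hLY : 0 ≤ LY)
    (M : ((Fin d → ℝ) → ℝ) → ((Fin d → ℝ) → ℝ))
    (hMcont : ∀ f, ContinuousOn f (cube d) → ContinuousOn (M f) (cube d))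
    (hMlip : ∀ f₁ f₂, ContinuousOn f₁ (cube d) → ContinuousOn f₂ (cube d) →
      supNorm d (fun x => M f₁ x - M f₂ x) ≤ LM * supNorm d (fun x => f₁ x - f₂ x))
    (hMout : ∀ f, ContinuousOn f (cube d) →
      ∀ x₁ ∈ cube d, ∀ x₂ ∈ cube d, |M f x₁ - M f x₂| ≤ LY * eucDist x₁ x₂)
    (V : ((Fin d → ℝ) → ℝ) → ((Fin d → ℝ) → ℝ))
    (hVadd : ∀ f g, ContinuousOn f (cube d) → ContinuousOn g (cube d) →
      ∀ x, V (fun y => f y + g y) x = V f x + V g x)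
    (hVsmul : ∀ (c : ℝ) f, ContinuousOn f (cube d) →
      ∀ x, V (fun y => c * f y) x = c * V f x)
    (hVpoly : ∀ h, ContinuousOn h (cube d) → IsPolyDeg d m (V h))
    (hVerr : ∀ h, ContinuousOn h (cube d) →
      supNorm d (fun x => h x - V h x) ≤ (5 * (d : ℝ) / 4) * modCont d h (2 / (m : ℝ)))
    (f : (Fin d → ℝ) → ℝ) (hf : ContinuousOn f (cube d)) :
    (∀ x₁ ∈ cube d, ∀ x₂ ∈ cube d,
        |M (V f) x₁ - M (V f) x₂| ≤
          (5 * LM * (d : ℝ) / 2) * modCont d f (2 / (m : ℝ)) + LY * eucDist x₁ x₂) ∧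
      modCont d (M (V f)) (2 / (m : ℝ)) ≤
        (5 * LM * (d : ℝ) / 2) * modCont d f (2 / (m : ℝ)) + 2 * LY / (m : ℝ) :=
by
  -- continuity of `V f`
  obtain ⟨p, -, hp⟩ := hVpoly f hf
  have hVf : ContinuousOn (V f) (cube d) := by
    have : V f = fun x => MvPolynomial.eval x p := funext hp
    rw [this]
    exact (MvPolynomial.continuous_eval p).continuousOn
  -- sup-norm bound on `V f - f`
  have hswap : supNorm d (fun x => V f x - f x) = supNorm d (fun x => f x - V f x) := by
    unfold supNorm
    congr 1
    ext y
    constructor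
    · rintro ⟨x, hx, rfl⟩; exact ⟨x, hx, (abs_sub_comm _ _)⟩
    · rintro ⟨x, hx, rfl⟩; exact ⟨x, hx, (abs_sub_comm _ _)⟩
  have herr : supNorm d (fun x => V f x - f x) ≤
      (5 * (d : ℝ) / 4) * modCont d f (2 / (m : ℝ)) := by
    rw [hswap]; exact hVerr f hf
  have hlip : supNorm d (fun x => M (V f) x - M f x) ≤
      LM * ((5 * (d : ℝ) / 4) * modCont d f (2 / (m : ℝ))) :=
    (hMlip (V f) f hVf hf).trans (mul_le_mul_of_nonneg_left herr hLM)
  have hMVf : ContinuousOn (M (V f)) (cube d) := hMcont _ hVf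
  have hMf : ContinuousOn (M f) (cube d) := hMcont _ hf
  have hdiffcont : ContinuousOn (fun x => M (V f) x - M f x) (cube d) := hMVf.sub hMf
  have key : ∀ x₁ ∈ cube d, ∀ x₂ ∈ cube d,
      |M (V f) x₁ - M (V f) x₂| ≤
        (5 * LM * (d : ℝ) / 2) * modCont d f (2 / (m : ℝ)) + LY * eucDist x₁ x₂ := by
    intro x₁ hx₁ x₂ hx₂
    have h1 : |M (V f) x₁ - M f x₁| ≤ LM * ((5 * (d : ℝ) / 4) * modCont d f (2 / (m : ℝ))) :=
      (abs_le_supNorm _ hdiffcont hx₁).trans hlip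
    have h2 : |M (V f) x₂ - M f x₂| ≤ LM * ((5 * (d : ℝ) / 4) * modCont d f (2 / (m : ℝ))) :=
      (abs_le_supNorm _ hdiffcont hx₂).trans hlip
    have h3 : |M f x₁ - M f x₂| ≤ LY * eucDist x₁ x₂ := hMout f hf x₁ hx₁ x₂ hx₂
    have htri : |M (V f) x₁ - M (V f) x₂| ≤
        |M (V f) x₁ - M f x₁| + |M f x₁ - M f x₂| + |M f x₂ - M (V f) x₂| := by
      calc |M (V f) x₁ - M (V f) x₂| ≤ |M (V f) x₁ - M f x₂| + |M f x₂ - M (V f) x₂| :=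
            abs_sub_le _ _ _
        _ ≤ (|M (V f) x₁ - M f x₁| + |M f x₁ - M f x₂|) + |M f x₂ - M (V f) x₂| := by
            gcongr; exact abs_sub_le _ _ _
    have h2' : |M f x₂ - M (V f) x₂| ≤ LM * ((5 * (d : ℝ) / 4) * modCont d f (2 / (m : ℝ))) := by
      rwa [abs_sub_comm]
    nlinarith [htri, h1, h2', h3]
  refine ⟨key, ?_⟩
  have hm' : (0 : ℝ) < m := by exact_mod_cast hm
  have hne : ({y | ∃ x₁ ∈ cube d, ∃ x₂ ∈ cube d,
      eucDist x₁ x₂ ≤ 2 / (m : ℝ) ∧ y = |M (V f) x₁ - M (V f) x₂|} : Set ℝ).Nonempty := by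
    refine ⟨0, (fun _ => 0), fun i => by simp, (fun _ => 0), fun i => by simp, ?_, by simp⟩
    simp only [eucDist, sub_self]
    rw [show ∑ _i : Fin d, ((0:ℝ)) ^ 2 = 0 by simp, Real.sqrt_zero]
    positivity
  unfold modCont modContOn
  refine csSup_le hne ?_
  rintro y ⟨x₁, hx₁, x₂, hx₂, hdist, rfl⟩
  have hk := key x₁ hx₁ x₂ hx₂
  have h4 : LY * eucDist x₁ x₂ ≤ LY * (2 / (m : ℝ)) :=
    mul_le_mul_of_nonneg_left hdist hLY
  have hb : |M (V f) x₁ - M (V f) x₂| ≤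
      (5 * LM * (d : ℝ) / 2) * modCont d f (2 / (m : ℝ)) + LY * (2 / (m : ℝ)) := by linarith
  calc |M (V f) x₁ - M (V f) x₂| ≤ _ := hb
    _ = (5 * LM * (d : ℝ) / 2) * modCont d f (2 / (m : ℝ)) + 2 * LY / (m : ℝ) := by ring
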